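/- arXiv:2311.08128 — 4 statements merged into one kernel-verified Lean document; each statement's English description precedes it below -/
import Mathlib

section
/- Let n = 2^r with r ≥ 2, and let SD_n be the semi-dihedral group of order 4n. If B = ⟨ρ^{i₀}⟩ is a nontrivial proper subgroup of ⟨ρ⟩ with i₀ a divisor of n, i₀ ≥ 2, then the quotient group SD_n/B is isomorphic to the dihedral group of order 2i₀. -/
/-- In the semi-dihedral group `SD_n` (n = 2^r, r ≥ 2), the quotient by the nontrivial
proper subgroup `B = ⟨ρ^{i₀}⟩` of `⟨ρ⟩` (with `i₀ ∣ n`, `i₀ ≥ 2`) is isomorphic to the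
dihedral group of order `2·i₀`. -/
theorem stmt_2 (n r : ℕ) (hn : n = 2 ^ r) (hr : 2 ≤ r)
    {G : Type*} [Group G] [Fintype G] (ρ τ : G)
    (hG : Fintype.card G = 4 * n)
    (hρ : orderOf ρ = 2 * n) (hτ : τ ^ 2 = 1) (hrel : τ * ρ * τ = ρ ^ (n - 1))
    (hgen : Subgroup.closure {ρ, τ} = ⊤)
    (i₀ : ℕ) (hi₀ : i₀ ∣ n) (hi₀2 : 2 ≤ i₀)
    [hN : (Subgroup.zpowers (ρ ^ i₀)).Normal] :
    Nonempty ((G ⧸ Subgroup.zpowers (ρ ^ i₀)) ≃* DihedralGroup i₀) := by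
  haveI : NeZero i₀ := ⟨by omega⟩
  haveI : Fact (1 < i₀) := ⟨by omega⟩
  set B := Subgroup.zpowers (ρ ^ i₀) with hB
  set π : G →* G ⧸ B := QuotientGroup.mk' B with hπ
  set x : G ⧸ B := π ρ with hx
  set y : G ⧸ B := π τ with hy
  have hn4 : 4 ≤ n := by
    subst hn
    calc 4 = 2 ^ 2 := rfl
    _ ≤ 2 ^ r := Nat.pow_le_pow_right (by norm_num) hr
  -- τ is not a power of ρ
  have hτρ : τ ∉ Subgroup.zpowers ρ := by
    intro ht
    have hsub : Subgroup.closure {ρ, τ} ≤ Subgroup.zpowers ρ := by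
      rw [Subgroup.closure_le]
      intro g hg
      simp only [Set.mem_insert_iff, Set.mem_singleton_iff] at hg
      rcases hg with h | h
      · rw [h]; exact Subgroup.mem_zpowers ρ
      · rw [h]; exact ht
    rw [hgen, top_le_iff] at hsub
    have h1 : Nat.card (Subgroup.zpowers ρ) = 2 * n := by
      rw [Nat.card_zpowers, hρ]
    rw [hsub] at h1
    have h2 : Nat.card (⊤ : Subgroup G) = 4 * n := by
      rw [Subgroup.card_top, Nat.card_eq_fintype_card, hG]
    omega
  -- membership in B forces divisibility by i₀
  have hBmem : ∀ v : ℕ, ρ ^ v ∈ B → i₀ ∣ v := by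
    rintro v ⟨m, hm⟩
    have hm2 : (ρ ^ i₀) ^ m = ρ ^ v := hm
    have hm' : ρ ^ ((i₀ : ℤ) * m) = ρ ^ (v : ℤ) := by
      rw [zpow_mul, zpow_natCast, hm2, zpow_natCast]
    rw [zpow_eq_zpow_iff_modEq, hρ] at hm'
    have hd : ((2 * n : ℕ) : ℤ) ∣ (i₀ : ℤ) * m - v := Int.ModEq.dvd hm'.symm
    have hi2n : (i₀ : ℤ) ∣ ((2 * n : ℕ) : ℤ) :=
      Int.natCast_dvd_natCast.2 (hi₀.trans ⟨2, by ring⟩)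
    have h1 : (i₀ : ℤ) ∣ (i₀ : ℤ) * m - v := hi2n.trans hd
    have h2 : (i₀ : ℤ) ∣ (i₀ : ℤ) * m := ⟨m, rfl⟩
    have : (i₀ : ℤ) ∣ (v : ℤ) := by
      have := dvd_sub h2 h1
      simpa using this
    exact_mod_cast this
  have hρn : ρ ^ n ∈ B := by
    obtain ⟨c, rfl⟩ := hi₀
    rw [pow_mul]
    exact Subgroup.pow_mem B (Subgroup.mem_zpowers _) c
  have hπpow : ∀ k : ℕ, π (ρ ^ k) = x ^ k := fun k => map_pow π ρ k
  have hxi₀ : x ^ i₀ = 1 := by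
    rw [← hπpow, hπ, QuotientGroup.mk'_apply, QuotientGroup.eq_one_iff]
    exact Subgroup.mem_zpowers _
  have hox : orderOf x = i₀ := by
    refine Nat.dvd_antisymm (orderOf_dvd_of_pow_eq_one hxi₀) (hBmem _ ?_)
    have := hπpow (orderOf x)
    rw [pow_orderOf_eq_one, hπ, QuotientGroup.mk'_apply, QuotientGroup.eq_one_iff] at this
    exact this
  have hy2 : y * y = 1 := by
    rw [hy, ← map_mul, ← sq, hτ, map_one]
  have hyinv : y⁻¹ = y := inv_eq_of_mul_eq_one_right hy2
  have hconj : y * x * y⁻¹ = x⁻¹ := by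
    rw [hyinv]
    have h1 : π (ρ ^ (n - 1) * ρ) = 1 := by
      rw [hπ, QuotientGroup.mk'_apply, QuotientGroup.eq_one_iff, ← pow_succ]
      have hone : n - 1 + 1 = n := by omega
      rw [hone]; exact hρn
    have h2 : y * x * y = π (ρ ^ (n - 1)) := by
      rw [hy, hx, ← map_mul, ← map_mul, hrel]
    rw [h2]
    rw [map_mul] at h1
    exact eq_inv_of_mul_eq_one_left h1
  have hconjz : ∀ m : ℤ, y * x ^ m * y⁻¹ = x ^ (-m) := by
    intro m
    have : (MulAut.conj y) (x ^ m) = ((MulAut.conj y) x) ^ m := map_zpow _ _ _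
    simpa [MulAut.conj_apply, hconj, zpow_neg] using this
  have hswap : ∀ m : ℤ, x ^ m * y = y * x ^ (-m) := by
    intro m
    have h := hconjz (-m)
    rw [neg_neg, hyinv] at h
    have : y * x ^ (-m) * y * y = x ^ m * y := by rw [h]
    rw [mul_assoc, hy2, mul_one] at this
    exact this.symm
  have hvalcast : ∀ a b : ℤ, ((a : ZMod i₀) = (b : ZMod i₀)) → x ^ a = x ^ b := by
    intro a b h
    rw [ZMod.intCast_eq_intCast_iff] at h
    rw [zpow_eq_zpow_iff_modEq, hox]
    exact h
  have hv : ∀ k : ZMod i₀, ((k.val : ℤ) : ZMod i₀) = k := by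
    intro k
    push_cast
    simp [ZMod.natCast_val, ZMod.cast_id]
  -- the homomorphism from the dihedral group
  let f : DihedralGroup i₀ →* G ⧸ B := MonoidHom.mk'
    (fun g => match g with
      | .r k => x ^ (k.val : ℤ)
      | .sr k => y * x ^ (k.val : ℤ))
    (by
      rintro (a | a) (b | b)
      · show x ^ (((a + b).val : ℤ)) = x ^ ((a.val : ℤ)) * x ^ ((b.val : ℤ))
        rw [← zpow_add]
        exact hvalcast _ _ (by push_cast [hv]; ring)
      · show y * x ^ (((b - a).val : ℤ)) = x ^ ((a.val : ℤ)) * (y * x ^ ((b.val : ℤ)))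
        rw [← mul_assoc, hswap, mul_assoc, ← zpow_add]
        congr 1
        exact hvalcast _ _ (by push_cast [hv]; ring)
      · show y * x ^ (((a + b).val : ℤ)) = y * x ^ ((a.val : ℤ)) * x ^ ((b.val : ℤ))
        rw [mul_assoc, ← zpow_add]
        congr 1
        exact hvalcast _ _ (by push_cast [hv]; ring)
      · show x ^ (((b - a).val : ℤ)) = y * x ^ ((a.val : ℤ)) * (y * x ^ ((b.val : ℤ)))
        have e1 : y * x ^ ((a.val : ℤ)) * (y * x ^ ((b.val : ℤ)))
            = y * (x ^ ((a.val : ℤ)) * y) * x ^ ((b.val : ℤ)) := by group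
        rw [e1, hswap, ← mul_assoc, hy2, one_mul, ← zpow_add]
        exact (hvalcast _ _ (by push_cast [hv]; ring)).symm)
  have hfr : ∀ k : ZMod i₀, f (.r k) = x ^ (k.val : ℤ) := fun k => rfl
  have hfsr : ∀ k : ZMod i₀, f (.sr k) = y * x ^ (k.val : ℤ) := fun k => rfl
  have hinj : Function.Injective f := by
    rw [injective_iff_map_eq_one]
    rintro (k | k) hk
    · rw [hfr] at hk
      rw [zpow_natCast] at hk
      have hd := orderOf_dvd_of_pow_eq_one hk
      rw [hox] at hd
      have hk0 : k.val = 0 := Nat.eq_zero_of_dvd_of_lt hd (ZMod.val_lt k)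
      have hk1 : k = 0 := (ZMod.val_eq_zero k).1 hk0
      rw [hk1, DihedralGroup.one_def]
    · rw [hfsr] at hk
      have hπm : π (τ * ρ ^ ((k.val : ℤ))) = 1 := by
        rw [map_mul, map_zpow]; exact hk
      rw [hπ, QuotientGroup.mk'_apply, QuotientGroup.eq_one_iff] at hπm
      obtain ⟨c, hc⟩ := hπm
      have hc2 : (ρ ^ i₀) ^ c = τ * ρ ^ ((k.val : ℤ)) := hc
      exfalso
      apply hτρ
      refine ⟨(i₀ : ℤ) * c - (k.val : ℤ), ?_⟩
      have hc3 : ρ ^ ((i₀ : ℤ) * c) = τ * ρ ^ ((k.val : ℤ)) := by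
        rw [zpow_mul, zpow_natCast]; exact hc2
      show ρ ^ ((i₀ : ℤ) * c - (k.val : ℤ)) = τ
      rw [zpow_sub, hc3]; group
  have hxr1 : f (.r 1) = x := by
    rw [hfr]
    have h1 : ((1 : ZMod i₀).val : ℤ) = 1 := by rw [ZMod.val_one]; norm_num
    rw [h1, zpow_one]
  have hyr : f (.sr 0) = y := by
    rw [hfsr]
    simp
  have hcl : Subgroup.closure ({x, y} : Set (G ⧸ B)) = ⊤ := by
    have hmap : Subgroup.map π ⊤ = ⊤ :=
      Subgroup.map_top_of_surjective π (QuotientGroup.mk'_surjective B)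
    rw [← hgen, MonoidHom.map_closure] at hmap
    rw [← hmap]
    congr 1
    rw [Set.image_insert_eq, Set.image_singleton]
  have hsurj : Function.Surjective f := by
    intro q
    have hle : (⊤ : Subgroup (G ⧸ B)) ≤ f.range := by
      rw [← hcl, Subgroup.closure_le]
      intro g hg
      simp only [Set.mem_insert_iff, Set.mem_singleton_iff] at hg
      rcases hg with h | h
      · rw [h]; exact ⟨.r 1, hxr1⟩
      · rw [h]; exact ⟨.sr 0, hyr⟩
    exact MonoidHom.mem_range.mp (hle (Subgroup.mem_top q))
  exact ⟨(MulEquiv.ofBijective f ⟨hinj, hsurj⟩).symm⟩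
end

section
/- Let n = 2^r with r ≥ 2. In the pseudo-semi-dihedral group PSD_n = ⟨ρ, τ | ρ^(2n) = τ² = 1, τρτ = ρ^(n+1)⟩ with 4 | n, the subgroup ⟨ρ², ρτ⟩ equals ⟨ρτ⟩ and is a cyclic group of order 2n. -/
/-- In the pseudo-semi-dihedral group `PSD_n` (n = 2^r, r ≥ 2, so `4 ∣ n`), the subgroup
`⟨ρ², ρτ⟩` equals `⟨ρτ⟩` and is cyclic of order `2n`. -/
theorem stmt_4 (n r : ℕ) (hn : n = 2 ^ r) (hr : 2 ≤ r)
    {G : Type*} [Group G] [Fintype G] (ρ τ : G)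
    (hG : Fintype.card G = 4 * n)
    (hρ : orderOf ρ = 2 * n) (hτ : τ ^ 2 = 1) (hrel : τ * ρ * τ = ρ ^ (n + 1))
    (hgen : Subgroup.closure {ρ, τ} = ⊤) :
    Subgroup.closure {ρ ^ 2, ρ * τ} = Subgroup.zpowers (ρ * τ) ∧
      orderOf (ρ * τ) = 2 * n := by
  obtain ⟨s, rfl⟩ : ∃ s, r = s + 2 := ⟨r - 2, by omega⟩
  set m := 2 ^ s with hm
  have hm1 : 1 ≤ m := Nat.one_le_two_pow
  have hn4 : n = 4 * m := by rw [hn, pow_add]; ring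
  have hτρ : τ * ρ = ρ ^ (n + 1) * τ := by
    have h : τ * ρ * τ * τ = ρ ^ (n + 1) * τ := by rw [hrel]
    rwa [mul_assoc (τ * ρ), ← sq, hτ, mul_one] at h
  have hsq : (ρ * τ) ^ 2 = ρ ^ (n + 2) := by
    have : (ρ * τ) ^ 2 = ρ * (τ * ρ) * τ := by
      simp [sq, mul_assoc]
    rw [this, hτρ, ← mul_assoc, ← pow_succ']
    rw [mul_assoc, ← sq, hτ, mul_one]
  have hord : ∀ k, ρ ^ k = 1 ↔ 2 * n ∣ k := by
    intro k; rw [← hρ, orderOf_dvd_iff_pow_eq_one]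
  have hρ2n : ρ ^ (2 * n) = 1 := (hord _).2 dvd_rfl
  -- (ρτ)^n = ρ^n
  have hpn : (ρ * τ) ^ n = ρ ^ n := by
    have : (ρ * τ) ^ n = ((ρ * τ) ^ 2) ^ (2 * m) := by
      rw [← pow_mul]; congr 1; omega
    rw [this, hsq, ← pow_mul]
    have he : (n + 2) * (2 * m) = (2 * n) * m + n := by rw [hn4]; ring
    rw [he, pow_add, pow_mul, hρ2n, one_pow, one_mul]
  have hρn : ρ ^ n ≠ 1 := by
    rw [Ne, hord]
    intro h
    have := Nat.le_of_dvd (by omega) h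
    omega
  have h2 : Fact (Nat.Prime 2) := ⟨Nat.prime_two⟩
  have hordτ : orderOf (ρ * τ) = 2 * n := by
    have h1 : ¬ (ρ * τ) ^ 2 ^ (s + 2) = 1 := by rw [← hn, hpn]; exact hρn
    have h2' : (ρ * τ) ^ 2 ^ (s + 3) = 1 := by
      have he : (2 : ℕ) ^ (s + 3) = 2 * n := by rw [hn]; ring
      rw [he]
      have : (ρ * τ) ^ (2 * n) = ((ρ * τ) ^ 2) ^ n := by rw [← pow_mul]
      rw [this, hsq, ← pow_mul, hord]
      exact ⟨2 * m + 1, by rw [hn4]; ring⟩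
    have := orderOf_eq_prime_pow h1 h2'
    rw [this, hn, pow_succ]; ring
  refine ⟨?_, hordτ⟩
  have hρ2mem : ρ ^ 2 ∈ Subgroup.zpowers (ρ * τ) := by
    have : ρ ^ 2 = ((ρ * τ) ^ n)⁻¹ * (ρ * τ) ^ 2 := by
      rw [hsq, hpn, pow_add, inv_mul_cancel_left]
    rw [this]
    exact Subgroup.mul_mem _ (Subgroup.inv_mem _ (Subgroup.pow_mem _ (Subgroup.mem_zpowers _) n)) (Subgroup.pow_mem _ (Subgroup.mem_zpowers _) 2)
  apply le_antisymm
  · rw [Subgroup.closure_le]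
    rintro x (rfl | rfl)
    · exact hρ2mem
    · exact Subgroup.mem_zpowers _
  · rw [Subgroup.zpowers_eq_closure]
    exact Subgroup.closure_mono (by simp)
end

section
/- If the cyclic group Z_{2n} (n > 1) contains a (n, 2, n, n/2)-relative difference set relative to its subgroup of order 2, then n is even. -/
/-- If the cyclic group `Z_{2n}` (n > 1) contains an `(n, 2, n, n/2)`-relative difference
set `D` relative to its subgroup `{0, n}` of order 2 (i.e. every element outside `{0, n}`
has exactly `n/2` representations as a difference of two elements of `D`, and `n` has
none), then `n` is even. -/
theorem stmt_15 (n : ℕ) (hn : 1 < n) (D : Finset (ZMod (2 * n)))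
    (hcard : D.card = n)
    (hrds : ∀ g : ZMod (2 * n), g ≠ 0 → g ≠ (n : ZMod (2 * n)) →
      ((D ×ˢ D).filter (fun p => p.1 - p.2 = g)).card = n / 2)
    (hforb : ((D ×ˢ D).filter (fun p => p.1 - p.2 = (n : ZMod (2 * n)))).card = 0) :
    Even n := by
  haveI : NeZero (2 * n) := ⟨by omega⟩
  by_contra hodd
  rw [Nat.not_even_iff_odd] at hodd
  obtain ⟨m, hm⟩ := hodd
  have hNne : (n : ZMod (2 * n)) ≠ 0 := by
    rw [Ne, ZMod.natCast_eq_zero_iff]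
    intro h
    have := Nat.le_of_dvd (by omega) h
    omega
  have key : (D ×ˢ D).card
      = ∑ g : ZMod (2 * n), ((D ×ˢ D).filter (fun p => p.1 - p.2 = g)).card :=
    Finset.card_eq_sum_card_fiberwise (fun x _ => Finset.mem_univ _)
  have hdiag : ((D ×ˢ D).filter (fun p => p.1 - p.2 = 0)).card = n := by
    have heq : (D ×ˢ D).filter (fun p => p.1 - p.2 = 0) = D.image (fun a => (a, a)) := by
      ext p
      simp only [Finset.mem_filter, Finset.mem_product, Finset.mem_image, sub_eq_zero]
      constructor
      · rintro ⟨⟨h1, h2⟩, h3⟩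
        exact ⟨p.1, h1, Prod.ext rfl h3⟩
      · rintro ⟨a, ha, rfl⟩
        exact ⟨⟨ha, ha⟩, rfl⟩
    rw [heq, Finset.card_image_of_injective _ (fun a b h => congrArg Prod.fst h), hcard]
  have hsub : ({0, (n : ZMod (2 * n))} : Finset (ZMod (2 * n))) ⊆ Finset.univ :=
    Finset.subset_univ _
  have hsplit : ∑ g : ZMod (2 * n), ((D ×ˢ D).filter (fun p => p.1 - p.2 = g)).card
      = (∑ g ∈ (Finset.univ \ {0, (n : ZMod (2 * n))}),
          ((D ×ˢ D).filter (fun p => p.1 - p.2 = g)).card)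
        + ∑ g ∈ ({0, (n : ZMod (2 * n))} : Finset (ZMod (2 * n))),
          ((D ×ˢ D).filter (fun p => p.1 - p.2 = g)).card :=
    (Finset.sum_sdiff hsub).symm
  have hpair : ∑ g ∈ ({0, (n : ZMod (2 * n))} : Finset (ZMod (2 * n))),
      ((D ×ˢ D).filter (fun p => p.1 - p.2 = g)).card = n := by
    rw [Finset.sum_pair (Ne.symm hNne), hdiag, hforb]
    omega
  have hrest : ∑ g ∈ (Finset.univ \ {0, (n : ZMod (2 * n))}),
      ((D ×ˢ D).filter (fun p => p.1 - p.2 = g)).card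
      = (2 * n - 2) * (n / 2) := by
    rw [Finset.sum_congr rfl (fun g hg => by
      simp only [Finset.mem_sdiff, Finset.mem_insert, Finset.mem_singleton, not_or] at hg
      exact hrds g hg.2.1 hg.2.2)]
    rw [Finset.sum_const, smul_eq_mul]
    congr 1
    rw [Finset.card_sdiff_of_subset (Finset.subset_univ _), Finset.card_univ, ZMod.card,
      Finset.card_pair (Ne.symm hNne)]
  have hprod : (D ×ˢ D).card = n * n := by rw [Finset.card_product, hcard]
  have hfinal : n * n = (2 * n - 2) * (n / 2) + n := by
    rw [← hprod, key, hsplit, hpair, hrest]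
  have hm2 : n / 2 = m := by omega
  rw [hm2, hm] at hfinal
  have h4 : 2 * (2 * m + 1) - 2 = 4 * m := by omega
  rw [h4] at hfinal
  nlinarith [hfinal]
end

section
/- Let n ≥ 4 be a power of 2 and let A ⊆ Z_{2n} \ {0} with A = -A. If Cay(Z_{2n}, A) is a strongly regular graph with parameters (2n, |A|, λ', μ') satisfying λ' = μ', then either A = Z_{2n} \ {0} (complete graph) or A = {n} (in which case the graph is a perfect matching nK₂ and is not strongly regular); in particular no strongly regular circulant on 2n = 2^{r+1} vertices has λ' = μ'. -/
open Classical

open Polynomial Finset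

lemma aux_sum_zmod {m : ℕ} [NeZero m] {M : Type*} [AddCommMonoid M] (g : ℕ → M) :
    ∑ x : ZMod m, g x.val = ∑ j ∈ Finset.range m, g j := by
  apply Finset.sum_nbij' (i := fun x : ZMod m => x.val) (j := fun j : ℕ => (j : ZMod m))
  · intro a _; exact Finset.mem_range.2 (ZMod.val_lt a)
  · intro a _; exact Finset.mem_univ _
  · intro a _; exact ZMod.natCast_rightInverse a
  · intro a ha; exact ZMod.val_cast_of_lt (Finset.mem_range.1 ha)
  · intro a _; rfl

lemma aux_coeffs {n : ℕ} (hn : 0 < n) (hirr : Irreducible (X ^ n + C (1:ℚ)))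
    (d : ℕ → ℤ)
    (h : ∑ j ∈ Finset.range n,
        ((d j : ℤ) : AdjoinRoot (X ^ n + C (1:ℚ))) * (AdjoinRoot.root (X ^ n + C (1:ℚ))) ^ j = 0) :
    ∀ j < n, d j = 0 := by
  intro j hj
  set f : ℚ[X] := X ^ n + C 1 with hf
  set p : ℚ[X] := ∑ i ∈ Finset.range n, C ((d i : ℚ)) * X ^ i with hp
  have hmk : AdjoinRoot.mk f p = 0 := by
    rw [hp, map_sum, ← h]
    apply Finset.sum_congr rfl
    intro i _
    rw [map_mul, map_pow, AdjoinRoot.mk_X, AdjoinRoot.mk_C]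
    norm_num
  have hdvd : f ∣ p := (AdjoinRoot.mk_eq_zero).1 hmk
  have hfdeg : f.degree = n := by
    rw [hf]; exact Polynomial.degree_X_pow_add_C hn 1
  have hpdeg : p.degree < (n : WithBot ℕ) := by
    rw [hp]
    apply lt_of_le_of_lt (Polynomial.degree_sum_le _ _)
    rw [Finset.sup_lt_iff (by exact_mod_cast WithBot.bot_lt_coe n)]
    intro i hi
    apply lt_of_le_of_lt (Polynomial.degree_C_mul_X_pow_le _ _)
    exact_mod_cast Finset.mem_range.1 hi
  have hp0 : p = 0 := Polynomial.eq_zero_of_dvd_of_degree_lt hdvd (by rw [hfdeg]; exact hpdeg)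
  have hco := congrArg (fun q : ℚ[X] => q.coeff j) hp0
  simp only [hp, Polynomial.finset_sum_coeff, Polynomial.coeff_C_mul, Polynomial.coeff_X_pow,
    Polynomial.coeff_zero, mul_ite, mul_one, mul_zero] at hco
  rw [Finset.sum_ite_eq (Finset.range n) j, if_pos (Finset.mem_range.2 hj)] at hco
  exact_mod_cast hco

/-- Let `n = 2^r ≥ 4` and let `A ⊆ Z_{2n} \ {0}` with `A = -A` and `0 < |A| < 2n - 1`.
If the circulant `Cay(Z_{2n}, A)` is strongly regular with parameters
`(2n, |A|, λ', μ')` where `λ' = μ'`, then `A = Z_{2n} \ {0}` or `A = {n}`;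
in particular no strongly regular circulant on `2n = 2^{r+1}` vertices has `λ' = μ'`. -/
theorem stmt_18 (n r : ℕ) (hn : n = 2 ^ r) (hr : 2 ≤ r) [NeZero (2 * n)]
    (A : Finset (ZMod (2 * n))) (h0 : (0 : ZMod (2 * n)) ∉ A)
    (hneg : ∀ x ∈ A, -x ∈ A)
    (hk0 : 0 < A.card) (hk1 : A.card < 2 * n - 1) (μ : ℕ)
    (hsrg : (SimpleGraph.fromRel (fun x y : ZMod (2 * n) => x - y ∈ A)).IsSRGWith
      (2 * n) A.card μ μ) :
    A = Finset.univ.erase (0 : ZMod (2 * n)) ∨ A = {(n : ZMod (2 * n))} := by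
  classical
  have hnpos : 0 < n := by subst hn; positivity
  have hA_iff : ∀ x, -x ∈ A ↔ x ∈ A := by
    intro x
    constructor
    · intro h; simpa using hneg _ h
    · exact hneg x
  set G := SimpleGraph.fromRel (fun x y : ZMod (2 * n) => x - y ∈ A) with hG
  have hadj : ∀ x y, G.Adj x y ↔ x - y ∈ A := by
    intro x y
    rw [hG, SimpleGraph.fromRel_adj]
    constructor
    · rintro ⟨hne, h | h⟩
      · exact h
      · have := hneg _ h; simpa using this
    · intro h
      refine ⟨?_, Or.inl h⟩
      rintro rfl
      rw [sub_self] at h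
      exact h0 h
  set N : ZMod (2 * n) → ℕ := fun d => (A.filter fun z => z - d ∈ A).card with hNdef
  have hNmu : ∀ d : ZMod (2 * n), d ≠ 0 → N d = μ := by
    intro d hd
    have hcn : ∀ x, x ∈ G.commonNeighbors 0 d ↔ (x ∈ A ∧ x - d ∈ A) := by
      intro x
      rw [SimpleGraph.mem_commonNeighbors, hadj, hadj, zero_sub, hA_iff,
        show d - x = -(x - d) by ring, hA_iff]
    have hcard : Fintype.card (G.commonNeighbors 0 d) = N d := by
      rw [hNdef]
      apply Fintype.card_of_subtype
      intro x
      rw [Finset.mem_filter]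
      exact (hcn x).symm
    by_cases hdA : d ∈ A
    · have hAdj : G.Adj 0 d := (hadj 0 d).2 (by rw [zero_sub, hA_iff]; exact hdA)
      rw [← hcard]
      exact hsrg.of_adj 0 d hAdj
    · have hna : ¬ G.Adj 0 d := by
        rw [hadj, zero_sub, hA_iff]; exact hdA
      rw [← hcard]
      exact hsrg.of_not_adj (Ne.symm hd) hna
  -- counting identities
  have hN0 : N 0 = A.card := by
    rw [hNdef]
    simp only [sub_zero]
    rw [Finset.filter_true_of_mem (fun x hx => hx)]
  have hswap : ∀ s : Finset (ZMod (2 * n)),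
      ∑ d ∈ s, N d = ∑ z ∈ A, (s.filter fun d => z - d ∈ A).card := by
    intro s
    rw [hNdef]
    simp only [Finset.card_filter]
    rw [Finset.sum_comm]
  have hinner : ∀ (z : ZMod (2 * n)) (s : Finset (ZMod (2 * n))),
      (s.filter fun d => z - d ∈ A).card = (A.filter fun w => z - w ∈ s).card := by
    intro z s
    apply Finset.card_nbij' (i := fun d => z - d) (j := fun w => z - w)
    · intro a ha
      rw [Finset.mem_coe, Finset.mem_filter] at ha ⊢
      exact ⟨ha.2, by rw [show z - (z - a) = a by ring]; exact ha.1⟩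
    · intro a ha
      rw [Finset.mem_coe, Finset.mem_filter] at ha ⊢
      exact ⟨ha.2, by rw [show z - (z - a) = a by ring]; exact ha.1⟩
    · intro a _; ring
    · intro a _; ring
  have hk2 : A.card * A.card = A.card + (2 * n - 1) * μ := by
    have h1 : ∑ d : ZMod (2 * n), N d = A.card * A.card := by
      rw [hswap]
      have : ∀ z ∈ A, (Finset.univ.filter fun d => z - d ∈ A).card = A.card := by
        intro z _
        rw [hinner]
        congr 1
        apply Finset.filter_true_of_mem
        intro x _
        exact Finset.mem_univ _
      rw [Finset.sum_congr rfl this, Finset.sum_const, smul_eq_mul]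
    have h2 : ∑ d : ZMod (2 * n), N d = A.card + (2 * n - 1) * μ := by
      rw [← Finset.add_sum_erase _ _ (Finset.mem_univ (0 : ZMod (2 * n))), hN0]
      congr 1
      rw [Finset.sum_congr rfl (fun d hd => hNmu d (Finset.ne_of_mem_erase hd)),
        Finset.sum_const, smul_eq_mul]
      congr 1
      rw [Finset.card_erase_of_mem (Finset.mem_univ _), Finset.card_univ, ZMod.card]
    omega
  -- parity counting
  set φ : ZMod (2 * n) →+* ZMod 2 := ZMod.castHom (dvd_mul_right 2 n) (ZMod 2) with hφ
  set e : ℕ := (A.filter fun x => φ x = 0).card with he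
  set o : ℕ := (A.filter fun x => φ x = 1).card with ho
  have hZM2 : ∀ a : ZMod 2, ¬ (a = 0) ↔ a = 1 := by decide
  have h21 : (-1 : ZMod 2) = 1 := by decide
  have hfeqA : (A.filter fun x => ¬ (φ x = 0)) = (A.filter fun x => φ x = 1) :=
    Finset.filter_congr (fun x _ => hZM2 (φ x))
  have heok : e + o = A.card := by
    rw [he, ho, ← hfeqA]
    exact Finset.card_filter_add_card_filter_not _
  have hOcard : (Finset.univ.filter fun d : ZMod (2 * n) => φ d = 1).card = n := by
    have hbij : (Finset.univ.filter fun d : ZMod (2 * n) => φ d = 0).card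
        = (Finset.univ.filter fun d : ZMod (2 * n) => φ d = 1).card := by
      apply Finset.card_nbij' (i := fun d => d + 1) (j := fun d => d - 1)
      · intro a ha
        rw [Finset.mem_coe, Finset.mem_filter] at ha ⊢
        refine ⟨Finset.mem_univ _, ?_⟩
        rw [map_add, ha.2, map_one, zero_add]
      · intro a ha
        rw [Finset.mem_coe, Finset.mem_filter] at ha ⊢
        refine ⟨Finset.mem_univ _, ?_⟩
        rw [map_sub, ha.2, map_one, sub_self]
      · intro a _; ring
      · intro a _; ring
    have hfequ : (Finset.univ.filter fun d : ZMod (2 * n) => ¬ (φ d = 0))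
        = (Finset.univ.filter fun d : ZMod (2 * n) => φ d = 1) :=
      Finset.filter_congr (fun x _ => hZM2 (φ x))
    have hsplit : (Finset.univ.filter fun d : ZMod (2 * n) => φ d = 0).card
        + (Finset.univ.filter fun d : ZMod (2 * n) => φ d = 1).card = 2 * n := by
      rw [← hfequ, Finset.card_filter_add_card_filter_not, Finset.card_univ, ZMod.card]
    omega
  have heo : e * o + o * e = n * μ := by
    have h1 : ∑ d ∈ (Finset.univ.filter fun d : ZMod (2 * n) => φ d = 1), N d = n * μ := by
      rw [Finset.sum_congr rfl (fun d hd => hNmu d ?_), Finset.sum_const, smul_eq_mul, hOcard]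
      intro h
      rw [Finset.mem_filter] at hd
      rw [h, map_zero] at hd
      exact one_ne_zero hd.2.symm
    have h2 : ∀ z ∈ A,
        ((Finset.univ.filter fun d : ZMod (2 * n) => φ d = 1).filter fun d => z - d ∈ A).card
        = (A.filter fun w => φ w = φ z + 1).card := by
      intro z _
      rw [Finset.filter_filter]
      apply Finset.card_nbij' (i := fun d => z - d) (j := fun w => z - w)
      · intro a ha
        rw [Finset.mem_coe, Finset.mem_filter] at ha ⊢
        obtain ⟨-, ha1, ha2⟩ := ha
        refine ⟨ha2, ?_⟩
        rw [map_sub, ha1, sub_eq_add_neg, h21]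
      · intro a ha
        rw [Finset.mem_coe, Finset.mem_filter] at ha ⊢
        obtain ⟨ha1, ha2⟩ := ha
        refine ⟨Finset.mem_univ _, ?_, by rw [show z - (z - a) = a by ring]; exact ha1⟩
        rw [map_sub, ha2, show φ z - (φ z + 1) = -1 by ring, h21]
      · intro a _; ring
      · intro a _; ring
    have h3 : ∑ z ∈ A, (A.filter fun w => φ w = φ z + 1).card = e * o + o * e := by
      rw [← Finset.sum_filter_add_sum_filter_not A (fun z => φ z = 0)]
      congr 1
      · have hz0 : ∀ z ∈ A.filter (fun z => φ z = 0),
            (A.filter fun w => φ w = φ z + 1).card = o := by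
          intro z hz
          rw [Finset.mem_filter] at hz
          rw [ho]
          congr 1
          apply Finset.filter_congr
          intro w _
          rw [hz.2, zero_add]
        rw [Finset.sum_congr rfl hz0, Finset.sum_const, smul_eq_mul, ← he]
      · have hz1 : ∀ z ∈ A.filter (fun z => ¬ (φ z = 0)),
            (A.filter fun w => φ w = φ z + 1).card = e := by
          intro z hz
          rw [Finset.mem_filter] at hz
          have : φ z = 1 := (hZM2 _).1 hz.2
          rw [he]
          congr 1
          apply Finset.filter_congr
          intro w _
          rw [this, show (1 : ZMod 2) + 1 = 0 by decide]
        rw [Finset.sum_congr rfl hz1, Finset.sum_const, smul_eq_mul, hfeqA, ← ho]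
    rw [← h3, ← h1, hswap, Finset.sum_congr rfl h2]
  -- the key integer identity
  have ht2 : ((e : ℤ) - o) ^ 2 = (A.card : ℤ) - μ := by
    have hk2' : (A.card : ℤ) * A.card = A.card + (2 * (n : ℤ) - 1) * μ := by
      have hcast := congrArg (Nat.cast : ℕ → ℤ) hk2
      push_cast [Nat.cast_sub (show 1 ≤ 2 * n by omega)] at hcast
      linear_combination hcast
    have heo' : (e : ℤ) * o + (o : ℤ) * e = n * μ := by exact_mod_cast heo
    have heok' : (e : ℤ) + o = A.card := by exact_mod_cast heok
    linear_combination ((e : ℤ) + o + A.card) * heok' + hk2' - 2 * heo'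
  -- the cyclotomic ring
  have hcyc : (Polynomial.cyclotomic (2 ^ (r + 1)) ℚ) = X ^ n + C 1 := by
    rw [Polynomial.cyclotomic_prime_pow_eq_geom_sum Nat.prime_two]
    rw [Finset.sum_range_succ, Finset.sum_range_one]
    rw [hn]
    simp [add_comm]
  have hirr : Irreducible (X ^ n + C (1 : ℚ)) := by
    rw [← hcyc]
    exact Polynomial.cyclotomic.irreducible_rat (by positivity)
  haveI hfact : Fact (Irreducible (X ^ n + C (1 : ℚ))) := ⟨hirr⟩
  set R := AdjoinRoot (X ^ n + C (1 : ℚ)) with hR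
  set ω : R := AdjoinRoot.root _ with hω
  haveI : CharZero R := charZero_of_injective_algebraMap (algebraMap ℚ R).injective
  have hωn : ω ^ n = -1 := by
    have h1 : AdjoinRoot.mk (X ^ n + C (1:ℚ)) (X ^ n + C (1:ℚ)) = 0 := by
      rw [AdjoinRoot.mk_self]
    rw [map_add, map_pow, AdjoinRoot.mk_X, AdjoinRoot.mk_C] at h1
    have : ω ^ n + 1 = 0 := by rw [← h1]; norm_num; rfl
    linear_combination this
  have hω2n : ω ^ (2 * n) = 1 := by
    rw [two_mul, pow_add, hωn]
    ring
  have hωpow : ∀ a : ℕ, ω ^ (a % (2 * n)) = ω ^ a := by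
    intro a
    conv_rhs => rw [← Nat.div_add_mod a (2 * n)]
    rw [pow_add, pow_mul, hω2n, one_pow, one_mul]
  have hW : ∀ x y : ZMod (2 * n), ω ^ (x + y).val = ω ^ x.val * ω ^ y.val := by
    intro x y
    rw [ZMod.val_add, hωpow, pow_add]
  set α : R := ∑ a ∈ A, ω ^ a.val with hα
  have hω1 : ω ≠ 1 := by
    intro h
    rw [h, one_pow] at hωn
    have h2 : (2 : R) = 0 := by linear_combination hωn
    exact two_ne_zero h2
  have hgeom : ∑ j ∈ Finset.range (2 * n), ω ^ j = 0 := by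
    have := geom_sum_eq hω1 (2 * n)
    rw [this, hω2n]
    simp
  have hsumW : ∑ x : ZMod (2 * n), ω ^ x.val = 0 := by
    rw [aux_sum_zmod (fun j => ω ^ j)]
    exact hgeom
  have hαneg : α = ∑ a ∈ A, ω ^ (-a).val := by
    rw [hα]
    apply Finset.sum_nbij' (i := fun a => -a) (j := fun a => -a)
    · intro a ha; exact hneg a ha
    · intro a ha; exact hneg a ha
    · intro a _; ring
    · intro a _; ring
    · intro a _; rw [neg_neg]
  have hαα : α * α = (A.card : R) - μ := by
    calc α * α = (∑ a ∈ A, ω ^ a.val) * (∑ b ∈ A, ω ^ (-b).val) := by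
          rw [← hα, ← hαneg]
      _ = ∑ a ∈ A, ∑ b ∈ A, ω ^ (a + -b).val := by
          rw [Finset.sum_mul_sum]
          apply Finset.sum_congr rfl
          intro a _
          apply Finset.sum_congr rfl
          intro b _
          rw [hW]
      _ = ∑ a ∈ A, ∑ d : ZMod (2 * n), (if a - d ∈ A then ω ^ d.val else 0) := by
          apply Finset.sum_congr rfl
          intro a _
          rw [Finset.sum_ite, Finset.sum_const_zero, add_zero]
          apply Finset.sum_nbij' (i := fun b => a - b) (j := fun d => a - d)
          · intro b hb
            rw [Finset.mem_filter]
            exact ⟨Finset.mem_univ _, by rw [show a - (a - b) = b by ring]; exact hb⟩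
          · intro d hd
            rw [Finset.mem_filter] at hd
            exact hd.2
          · intro b _; ring
          · intro d _; ring
          · intro b _; rw [sub_eq_add_neg]
      _ = ∑ d : ZMod (2 * n), (N d : R) * ω ^ d.val := by
          rw [Finset.sum_comm]
          apply Finset.sum_congr rfl
          intro d _
          rw [Finset.sum_ite, Finset.sum_const_zero, add_zero, Finset.sum_const,
            nsmul_eq_mul, hNdef]
      _ = (N 0 : R) * ω ^ (0 : ZMod (2 * n)).val
            + ∑ d ∈ Finset.univ.erase (0 : ZMod (2 * n)), (N d : R) * ω ^ d.val := by
          rw [← Finset.add_sum_erase _ _ (Finset.mem_univ (0 : ZMod (2 * n)))]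
      _ = (A.card : R) + (μ : R) * ∑ d ∈ Finset.univ.erase (0 : ZMod (2 * n)), ω ^ d.val := by
          rw [hN0, ZMod.val_zero, pow_zero, mul_one, Finset.mul_sum]
          congr 1
          apply Finset.sum_congr rfl
          intro d hd
          rw [hNmu d (Finset.ne_of_mem_erase hd)]
      _ = (A.card : R) - μ := by
          rw [Finset.sum_erase_eq_sub (Finset.mem_univ (0 : ZMod (2 * n))), hsumW,
            ZMod.val_zero, pow_zero]
          ring
  set c : ℕ → ℤ := fun j =>
    (if ((j : ℕ) : ZMod (2 * n)) ∈ A then 1 else 0)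
      - (if ((n + j : ℕ) : ZMod (2 * n)) ∈ A then 1 else 0) with hc
  have hvalcast : ∀ x : ZMod (2 * n), ((x.val : ZMod (2 * n))) = x :=
    fun x => ZMod.natCast_rightInverse x
  have hαc : α = ∑ j ∈ Finset.range n, ((c j : ℤ) : R) * ω ^ j := by
    have h1 : α = ∑ j ∈ Finset.range (2 * n),
        (if ((j : ℕ) : ZMod (2 * n)) ∈ A then ω ^ j else 0) := by
      rw [← aux_sum_zmod (m := 2 * n)
        (fun j => if ((j : ℕ) : ZMod (2 * n)) ∈ A then ω ^ j else 0)]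
      have e4 : ∑ x : ZMod (2 * n), (if ((x.val : ZMod (2 * n)) ∈ A) then ω ^ x.val else 0)
          = ∑ x : ZMod (2 * n), (if x ∈ A then ω ^ x.val else 0) :=
        Finset.sum_congr rfl (fun x _ => by rw [hvalcast x])
      rw [e4]
      rw [Finset.sum_ite_mem]
      rw [Finset.univ_inter]
    have hr2 : Finset.range (2 * n) = Finset.range (n + n) := by rw [two_mul]
    rw [h1, hr2, Finset.sum_range_add, ← Finset.sum_add_distrib]
    apply Finset.sum_congr rfl
    intro j hj
    have hjn : ω ^ (n + j) = -ω ^ j := by rw [pow_add, hωn]; ring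
    rw [hjn, hc]
    simp only []
    split_ifs <;> push_cast <;> ring
  obtain ⟨s, hs2, hsα⟩ : ∃ s : ℤ, s ^ 2 = (A.card : ℤ) - μ ∧ α = (s : R) := by
    have hcast : (((e : ℤ) - o : ℤ) : R) ^ 2 = (A.card : R) - μ := by
      have hcc := congrArg (fun z : ℤ => (z : R)) ht2
      push_cast at hcc
      push_cast
      linear_combination hcc
    have hfac : (α - (((e : ℤ) - o : ℤ) : R)) * (α + (((e : ℤ) - o : ℤ) : R)) = 0 := by
      linear_combination hαα - hcast
    rcases mul_eq_zero.1 hfac with h | h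
    · refine ⟨(e : ℤ) - o, ht2, ?_⟩
      push_cast at h ⊢
      linear_combination h
    · refine ⟨-((e : ℤ) - o), by rw [neg_sq]; exact ht2, ?_⟩
      push_cast at h ⊢
      linear_combination h
  set d : ℕ → ℤ := fun j => c j - (if j = 0 then s else 0) with hd
  have hdsum : ∑ j ∈ Finset.range n, ((d j : ℤ) : R) * ω ^ j = 0 := by
    have h1 : ∑ j ∈ Finset.range n, ((d j : ℤ) : R) * ω ^ j
        = (∑ j ∈ Finset.range n, ((c j : ℤ) : R) * ω ^ j)
          - ∑ j ∈ Finset.range n, (if j = 0 then (s : R) else 0) * ω ^ j := by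
      rw [← Finset.sum_sub_distrib]
      apply Finset.sum_congr rfl
      intro j _
      rw [hd]
      simp only []
      push_cast [apply_ite (fun z : ℤ => (z : R))]
      ring
    have h2 : ∑ j ∈ Finset.range n, (if j = 0 then (s : R) else 0) * ω ^ j = (s : R) := by
      rw [Finset.sum_eq_single_of_mem (0 : ℕ) (Finset.mem_range.2 hnpos)
        (fun j _ hj0 => by rw [if_neg hj0, zero_mul])]
      simp
    rw [h1, h2, ← hαc, hsα]
    ring
  have hd0 : d 0 = 0 := aux_coeffs hnpos hirr d hdsum 0 hnpos
  have hc0 : c 0 = s := by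
    rw [hd] at hd0
    simp at hd0
    linarith [hd0]
  have hc0v : c 0 = - (if ((n : ℕ) : ZMod (2 * n)) ∈ A then 1 else 0) := by
    rw [hc]
    simp only [Nat.cast_zero, Nat.add_zero]
    rw [if_neg h0, zero_sub]
  have hkmu : (A.card : ℤ) - μ = (if ((n : ℕ) : ZMod (2 * n)) ∈ A then 1 else 0) := by
    rw [← hs2, ← hc0, hc0v]
    split_ifs <;> norm_num
  have hk2' : (A.card : ℤ) * A.card = A.card + (2 * (n : ℤ) - 1) * μ := by
    have hcastk := congrArg (Nat.cast : ℕ → ℤ) hk2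
    push_cast [Nat.cast_sub (show 1 ≤ 2 * n by omega)] at hcastk
    linear_combination hcastk
  by_cases hnA : ((n : ℕ) : ZMod (2 * n)) ∈ A
  · right
    rw [if_pos hnA] at hkmu
    have hμ : (A.card : ℤ) = μ + 1 := by linarith [hkmu]
    have hone : ((A.card : ℤ) - 1) * ((A.card : ℤ) - (2 * n - 1)) = 0 := by
      linear_combination hk2' + (1 - 2 * (n : ℤ)) * hμ
    rcases mul_eq_zero.1 hone with h | h
    · have hk1'' : A.card = 1 := by omega
      obtain ⟨a, ha⟩ := Finset.card_eq_one.1 hk1''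
      rw [ha] at hnA
      rw [Finset.mem_singleton] at hnA
      rw [ha, hnA]
    · exfalso
      omega
  · exfalso
    rw [if_neg hnA] at hkmu
    have hμ : (A.card : ℤ) = μ := by linarith [hkmu]
    have h2 : (A.card : ℤ) * A.card = 2 * n * A.card := by
      linear_combination hk2' + (1 - 2 * (n : ℤ)) * hμ
    have hkpos : (0 : ℤ) < A.card := by exact_mod_cast hk0
    have hkc : (A.card : ℤ) = 2 * n := mul_right_cancel₀ hkpos.ne' h2
    omega
end
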